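/- Let C_α(t) be an exponentially bounded α-order fractional cosine family with generator A and let S_α(t)x = ∫₀ᵗ C_α(s)x ds. Then for every x ∈ D(A) and t ≥ 0: S_α(t)x = t·x + J_t^α (S_α(·)Ax)(t), where J_t^α is the Riemann–Liouville integral of order α. -/

import Mathlib

open MeasureTheory Set


/-- An exponentially bounded `α`-order solution operator (fractional cosine family)
with (possibly unbounded) generator `Aop` defined on `dom`. -/
structure FracCosine (X : Type*) [NormedAddCommGroup X] [NormedSpace ℝ X] (α : ℝ) where
  C : ℝ → X →L[ℝ] X
  dom : Set X
  Aop : X → X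
  strong_cont : ∀ x : X, ContinuousOn (fun t => C t x) (Ici 0)
  C_zero : C 0 = ContinuousLinearMap.id ℝ X
  maps_dom : ∀ x ∈ dom, ∀ t : ℝ, 0 ≤ t → C t x ∈ dom
  comm : ∀ x ∈ dom, ∀ t : ℝ, 0 ≤ t → Aop (C t x) = C t (Aop x)
  volterra : ∀ x ∈ dom, ∀ t : ℝ, 0 ≤ t →
    C t x = x + ∫ s in (0:ℝ)..t, ((t - s) ^ (α - 1) / Real.Gamma α) • Aop (C s x)
  M : ℝ
  ω : ℝ
  hM : 1 ≤ M
  hω : 0 ≤ ω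
  bound : ∀ t : ℝ, 0 ≤ t → ‖C t‖ ≤ M * Real.exp (ω * t)

/-!
Integrating the Volterra equation `C(s)x = x + J^α (C(·)Ax)(s)` over `[0, t]` gives
`S(t)x = t x + J^1 J^α (C(·)Ax)(t)`, while the right-hand side is `t x + J^α J^1 (C(·)Ax)(t)`.
Both `J^1 J^α` and `J^α J^1` equal `J^(α+1)`: swap the order of integration over the triangle
`0 ≤ r ≤ s ≤ t` and integrate the kernel in closed form,
`∫ᵣᵗ (s - r)^(α-1) ds = (t - r)^α / α`.
-/

open Function intervalIntegral

section TriangleSwap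

variable {E : Type*} [NormedAddCommGroup E] [NormedSpace ℝ E]

theorem intervalIntegral_integral_swap_triangle {g : ℝ → ℝ → E} {a b : ℝ} (hab : a ≤ b)
    (hg : ContinuousOn (uncurry g) (Icc a b ×ˢ Icc a b)) :
    ∫ s in a..b, ∫ r in a..s, g s r = ∫ r in a..b, ∫ s in r..b, g s r := by
  set F : ℝ → ℝ → E := fun s r => {p : ℝ × ℝ | p.2 < p.1}.indicator (uncurry g) (s, r)
  have hF : IntegrableOn (uncurry F) (uIoc a b ×ˢ uIoc a b) := by
    refine IntegrableOn.indicator ?_ (measurableSet_lt measurable_snd measurable_fst)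
    rw [uIoc_of_le hab]
    exact (hg.integrableOn_compact (isCompact_Icc.prod isCompact_Icc)).mono_set
      (prod_mono Ioc_subset_Icc_self Ioc_subset_Icc_self)
  have inner_left : ∀ s ∈ Icc a b, ∫ r in a..b, F s r = ∫ r in a..s, g s r := by
    intro s hs
    have : ∀ r, F s r = (Iio s).indicator (g s) r := fun r => by
      by_cases h : r < s <;> simp [F, h]
    simp only [this, integral_of_le hab, integral_of_le hs.1]
    rw [setIntegral_indicator measurableSet_Iio,
      setIntegral_congr_set (Filter.EventuallyEq.rfl.inter Iio_ae_eq_Iic), Ioc_inter_Iic,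
      inf_of_le_right hs.2]
  have inner_right : ∀ r ∈ Icc a b, ∫ s in a..b, F s r = ∫ s in r..b, g s r := by
    intro r hr
    have : ∀ s, F s r = (Ioi r).indicator (fun s => g s r) s := fun s => by
      by_cases h : r < s <;> simp [F, h]
    simp only [this, integral_of_le hab, integral_of_le hr.2]
    rw [setIntegral_indicator measurableSet_Ioi, Ioc_inter_Ioi, sup_of_le_right hr.1]
  calc ∫ s in a..b, ∫ r in a..s, g s r = ∫ s in a..b, ∫ r in a..b, F s r :=
        integral_congr fun s hs => (inner_left s (by rwa [uIcc_of_le hab] at hs)).symm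
    _ = ∫ r in a..b, ∫ s in a..b, F s r := intervalIntegral_intervalIntegral_swap hF
    _ = ∫ r in a..b, ∫ s in r..b, g s r :=
        integral_congr fun r hr => inner_right r (by rwa [uIcc_of_le hab] at hr)

end TriangleSwap

noncomputable def rlKernel (α u : ℝ) : ℝ := u ^ (α - 1) / Real.Gamma α

theorem continuous_rlKernel {α : ℝ} (hα : 1 ≤ α) : Continuous (rlKernel α) :=
  (continuous_id.rpow_const fun _ => Or.inr (by linarith)).div_const _

theorem integral_rlKernel {α : ℝ} (hα : 0 < α) (t : ℝ) :
    ∫ u in (0:ℝ)..t, rlKernel α u = rlKernel (α + 1) t := by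
  simp only [rlKernel, intervalIntegral.integral_div]
  rw [integral_rpow (Or.inl (by linarith)), sub_add_cancel, Real.zero_rpow hα.ne',
    Real.Gamma_add_one hα.ne', add_sub_cancel_right, sub_zero, div_div]

theorem integral_rlKernel_sub_right {α : ℝ} (hα : 0 < α) (r t : ℝ) :
    ∫ s in r..t, rlKernel α (s - r) = rlKernel (α + 1) (t - r) := by
  rw [integral_comp_sub_right (rlKernel α), sub_self, integral_rlKernel hα]

theorem integral_rlKernel_sub_left {α : ℝ} (hα : 0 < α) (r t : ℝ) :
    ∫ s in r..t, rlKernel α (t - s) = rlKernel (α + 1) (t - r) := by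
  rw [integral_comp_sub_left (rlKernel α), sub_self, integral_rlKernel hα]

section RiemannLiouville

variable {E : Type*} [NormedAddCommGroup E] [NormedSpace ℝ E]

/-- The paper's `J_t^α f(t)`. -/
noncomputable def rlIntegral (α : ℝ) (f : ℝ → E) (t : ℝ) : E :=
  ∫ s in (0:ℝ)..t, rlKernel α (t - s) • f s

variable [CompleteSpace E] {α t : ℝ} {f : ℝ → E}

theorem integral_rlIntegral (hα : 1 ≤ α) (ht : 0 ≤ t) (hf : ContinuousOn f (Icc 0 t)) :
    ∫ s in (0:ℝ)..t, rlIntegral α f s = rlIntegral (α + 1) f t := by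
  have hg :
      ContinuousOn (uncurry fun s r => rlKernel α (s - r) • f r) (Icc 0 t ×ˢ Icc 0 t) :=
    ((continuous_rlKernel hα).comp_continuousOn (continuousOn_fst.sub continuousOn_snd)).smul
      (hf.comp continuousOn_snd fun _ hp => hp.2)
  unfold rlIntegral
  rw [intervalIntegral_integral_swap_triangle ht hg]
  refine integral_congr fun r _ => ?_
  rw [intervalIntegral.integral_smul_const, integral_rlKernel_sub_right (by linarith)]

theorem rlIntegral_intervalIntegral (hα : 1 ≤ α) (ht : 0 ≤ t)
    (hf : ContinuousOn f (Icc 0 t)) :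
    rlIntegral α (fun s => ∫ r in (0:ℝ)..s, f r) t = rlIntegral (α + 1) f t := by
  have hg :
      ContinuousOn (uncurry fun s r => rlKernel α (t - s) • f r) (Icc 0 t ×ˢ Icc 0 t) :=
    ((continuous_rlKernel hα).comp_continuousOn (continuousOn_const.sub continuousOn_fst)).smul
      (hf.comp continuousOn_snd fun _ hp => hp.2)
  unfold rlIntegral
  simp_rw [← intervalIntegral.integral_smul]
  rw [intervalIntegral_integral_swap_triangle ht hg]
  refine integral_congr fun r _ => ?_
  rw [intervalIntegral.integral_smul_const, integral_rlKernel_sub_left (by linarith)]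

end RiemannLiouville

theorem FracCosine.sub_eq_rlIntegral {X : Type*} [NormedAddCommGroup X] [NormedSpace ℝ X]
    {α : ℝ} (S : FracCosine X α) {x : X} (hx : x ∈ S.dom) {s : ℝ} (hs : 0 ≤ s) :
    S.C s x - x = rlIntegral α (fun r => S.C r (S.Aop x)) s := by
  rw [S.volterra x hx s hs, add_sub_cancel_left]
  refine integral_congr fun r hr => ?_
  rw [uIcc_of_le hs] at hr
  simp only [rlKernel, S.comm x hx r hr.1]

/-- For an exponentially bounded `α`-order fractional cosine family `C_α` with
generator `A` and sine family `S_α(t)x = ∫₀ᵗ C_α(s)x ds`, one has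
`S_α(t)x = t • x + J_t^α (S_α(·) A x)(t)` for every `x ∈ D(A)` and `t ≥ 0`. -/
theorem sine_volterra_identity {X : Type*} [NormedAddCommGroup X] [NormedSpace ℝ X]
    [CompleteSpace X] {α : ℝ} (hα : α ∈ Set.Ioc 1 2) (S : FracCosine X α)
    (x : X) (hx : x ∈ S.dom) (t : ℝ) (ht : 0 ≤ t) :
    (∫ s in (0:ℝ)..t, S.C s x)
      = t • x + ∫ s in (0:ℝ)..t,
          ((t - s) ^ (α - 1) / Real.Gamma α) • (∫ r in (0:ℝ)..s, S.C r (S.Aop x)) := by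
  have hα1 : 1 ≤ α := hα.1.le
  have hCx : ContinuousOn (fun s => S.C s x) (Icc 0 t) :=
    (S.strong_cont x).mono Icc_subset_Ici_self
  have hCAx : ContinuousOn (fun s => S.C s (S.Aop x)) (Icc 0 t) :=
    (S.strong_cont _).mono Icc_subset_Ici_self
  calc ∫ s in (0:ℝ)..t, S.C s x = t • x + ∫ s in (0:ℝ)..t, (S.C s x - x) := by
        rw [integral_sub (hCx.intervalIntegrable_of_Icc ht) intervalIntegrable_const,
          intervalIntegral.integral_const, sub_zero, add_sub_cancel]
    _ = t • x + ∫ s in (0:ℝ)..t, rlIntegral α (fun r => S.C r (S.Aop x)) s := by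
        congr 1
        refine integral_congr fun s hs => ?_
        rw [uIcc_of_le ht] at hs
        exact S.sub_eq_rlIntegral hx hs.1
    _ = t • x + rlIntegral α (fun s => ∫ r in (0:ℝ)..s, S.C r (S.Aop x)) t := by
        rw [integral_rlIntegral hα1 ht hCAx, rlIntegral_intervalIntegral hα1 ht hCAx]
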